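/- Let p ≥ 2 be an integer and let G be a finite connected W_p graph of order n with independence number α. Then (i) n ≥ p·α, with n = p·α if and only if G is the complete graph on p vertices; and (ii) if α > 1, then the minimum degree satisfies δ(G) ≥ p. -/
import Mathlib


namespace WpGraphs

variable {V : Type*}

/-- `S` is an independent set of `G`: its vertices are pairwise non-adjacent. -/
def IsIndepSet (G : SimpleGraph V) (S : Set V) : Prop :=
  S.Pairwise fun u v => ¬ G.Adj u v

/-- The independence number `α(G)`: the cardinality of a largest independent set. -/
noncomputable def indepNum (G : SimpleGraph V) : ℕ :=
  sSup {n : ℕ | ∃ S : Set V, IsIndepSet G S ∧ S.ncard = n}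

/-- A maximum independent set: an independent set of cardinality `α(G)`. -/
def IsMaxIndepSet (G : SimpleGraph V) (S : Set V) : Prop :=
  IsIndepSet G S ∧ S.ncard = indepNum G

/-- A maximal independent set: an independent set that cannot be extended. -/
def IsMaximalIndepSet (G : SimpleGraph V) (S : Set V) : Prop :=
  IsIndepSet G S ∧ ∀ T : Set V, IsIndepSet G T → S ⊆ T → S = T

/-- `G` is a `W_p` graph: `n(G) ≥ p` and every `p` pairwise disjoint independent sets
are contained in `p` pairwise disjoint maximum independent sets. -/
def IsWp (G : SimpleGraph V) (p : ℕ) : Prop :=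
  p ≤ Nat.card V ∧
    ∀ A : Fin p → Set V, (∀ i, IsIndepSet G (A i)) →
      (Pairwise fun i j => Disjoint (A i) (A j)) →
      ∃ S : Fin p → Set V, (∀ i, IsMaxIndepSet G (S i)) ∧
        (Pairwise fun i j => Disjoint (S i) (S j)) ∧ ∀ i, A i ⊆ S i

/-- The neighborhood `N_G(S)` of a set of vertices `S`. -/
def setNbhd (G : SimpleGraph V) (S : Set V) : Set V :=
  {v | v ∉ S ∧ ∃ u ∈ S, G.Adj u v}

/-- `G` is `λ`-quasi-regularizable: `λ·|S| ≤ |N_G(S)|` for every independent set `S`. -/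
def QuasiReg (G : SimpleGraph V) (lam : ℝ) : Prop :=
  ∀ S : Set V, IsIndepSet G S → lam * S.ncard ≤ ((setNbhd G S).ncard : ℝ)

/-- `s_k(G)`: the number of independent sets of cardinality `k` in `G`
(the `k`-th coefficient of the independence polynomial). -/
noncomputable def indepCount (G : SimpleGraph V) (k : ℕ) : ℕ :=
  {S : Set V | IsIndepSet G S ∧ S.ncard = k}.ncard

/-- The independence polynomial of `G` is log-concave:
`s_k² ≥ s_{k-1}·s_{k+1}` for all `1 ≤ k ≤ α(G) - 1`. -/
def IndepLogConcave (G : SimpleGraph V) : Prop :=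
  ∀ k : ℕ, 1 ≤ k → k + 1 ≤ indepNum G →
    indepCount G (k - 1) * indepCount G (k + 1) ≤ indepCount G k ^ 2

/-- The vertex set of the localization `G_A = G − N_G[A]`:
all vertices outside `A` having no neighbor in `A`. -/
def locSet (G : SimpleGraph V) (A : Set V) : Set V :=
  {v | v ∉ A ∧ ∀ u ∈ A, ¬ G.Adj u v}

/-- `G` is well-covered: all maximal independent sets have the same size. -/
def IsWellCovered (G : SimpleGraph V) : Prop :=
  ∀ S T : Set V, IsMaximalIndepSet G S → IsMaximalIndepSet G T → S.ncard = T.ncard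

/-- `G` is very well-covered: well-covered, no isolated vertices, and `n(G) = 2·α(G)`. -/
def IsVeryWellCovered (G : SimpleGraph V) : Prop :=
  IsWellCovered G ∧ (∀ v : V, ∃ w : V, G.Adj v w) ∧ Nat.card V = 2 * indepNum G

/-- The clique corona `G∘𝓗` where `𝓗 = {K_{p v} : v ∈ V(G)}`: each vertex `v` of `G`
is joined to all vertices of its own copy of the complete graph `K_{p v}`. -/
def cliqueCorona (G : SimpleGraph V) (p : V → ℕ) :
    SimpleGraph (V ⊕ Σ v : V, Fin (p v)) :=
  SimpleGraph.fromRel fun a b =>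
    match a, b with
    | .inl u, .inl v => G.Adj u v
    | .inl u, .inr ⟨v, _⟩ => u = v
    | .inr ⟨u, _⟩, .inr ⟨v, _⟩ => u = v
    | .inr _, .inl _ => False

section helpers2
set_option linter.unusedSectionVars false
variable [Finite V] (G : SimpleGraph V)

lemma bddAbove_indep : BddAbove {n : ℕ | ∃ S : Set V, IsIndepSet G S ∧ S.ncard = n} := by
  refine ⟨Nat.card V, ?_⟩
  rintro n ⟨S, _, rfl⟩
  simpa [Set.ncard_univ] using Set.ncard_le_ncard (Set.subset_univ S) Set.finite_univ

lemma ncard_le_indepNum {S : Set V} (h : IsIndepSet G S) : S.ncard ≤ indepNum G :=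
  le_csSup (bddAbove_indep G) ⟨S, h, rfl⟩

lemma exists_adj_of_max {S : Set V} (hS : IsMaxIndepSet G S) {x : V} (hx : x ∉ S) :
    ∃ y ∈ S, G.Adj x y := by
  by_contra hcon
  push_neg at hcon
  have hind : IsIndepSet G (insert x S) := by
    intro a ha b hb hab
    rcases ha with rfl | ha
    · rcases hb with rfl | hb
      · exact absurd rfl hab
      · exact hcon b hb
    · rcases hb with rfl | hb
      · exact fun h => hcon a ha h.symm
      · exact hS.1 ha hb hab
  have h2 := ncard_le_indepNum G hind
  rw [Set.ncard_insert_of_notMem hx, hS.2] at h2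
  omega

lemma ncard_iUnion_of_disjoint {p : ℕ} (S : Fin p → Set V)
    (hd : Pairwise fun i j => Disjoint (S i) (S j)) :
    (⋃ i, S i).ncard = ∑ i, (S i).ncard := by
  classical
  cases nonempty_fintype V
  rw [Set.ncard_eq_toFinset_card']
  have h : (⋃ i, S i).toFinset = Finset.univ.biUnion fun i => (S i).toFinset := by
    ext x; simp
  rw [h, Finset.card_biUnion]
  · exact Finset.sum_congr rfl fun i _ => (Set.ncard_eq_toFinset_card' _).symm
  · intro i _ j _ hij
    exact Set.disjoint_toFinset.mpr (hd hij)

lemma sum_ncard_max {p : ℕ} {S : Fin p → Set V} (hmax : ∀ i, IsMaxIndepSet G (S i))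
    (hd : Pairwise fun i j => Disjoint (S i) (S j)) :
    (⋃ i, S i).ncard = p * indepNum G := by
  rw [ncard_iUnion_of_disjoint S hd]
  simp [fun i => (hmax i).2, Finset.sum_const, mul_comm]

lemma wp_card_le {p : ℕ} (hWp : IsWp G p) : p * indepNum G ≤ Nat.card V := by
  obtain ⟨S, hmax, hd, -⟩ := hWp.2 (fun _ => ∅) (fun i => Set.pairwise_empty _)
    (fun i j _ => by simp)
  calc p * indepNum G = (⋃ i, S i).ncard := (sum_ncard_max G hmax hd).symm
    _ ≤ Nat.card V := by
        simpa [Set.ncard_univ] using Set.ncard_le_ncard (Set.subset_univ _) Set.finite_univ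


lemma walk_closed {C : Set V} (hC : ∀ a ∈ C, ∀ b, G.Adj a b → b ∈ C) :
    ∀ {a b : V}, G.Walk a b → a ∈ C → b ∈ C := by
  intro a b w
  induction w with
  | nil => exact id
  | cons h _ ih => exact fun ha => ih (hC _ ha _ h)

lemma wp_deg {p : ℕ} (hp : 2 ≤ p) (hconn : G.Connected) (hWp : IsWp G p)
    (hα : 1 < indepNum G) (v : V) : p ≤ (G.neighborSet v).ncard := by
  classical
  cases nonempty_fintype V
  haveI : NeZero p := ⟨by omega⟩
  by_contra hlt
  push_neg at hlt
  have hstep1 : p - 1 ≤ (G.neighborSet v).ncard := by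
    obtain ⟨S, hmax, hd, hsub⟩ := hWp.2 (fun i => if i = 0 then {v} else ∅)
      (fun i => by
        split
        · exact Set.pairwise_singleton _ _
        · exact Set.pairwise_empty _)
      (fun i j hij => by dsimp only; split <;> split <;> simp_all)
    have hv0 : v ∈ S 0 := hsub 0 (by simp)
    have hvnot : ∀ i : Fin p, i ≠ 0 → v ∉ S i := fun i hi hmem =>
      Set.disjoint_left.mp (hd (Ne.symm hi)) hv0 hmem
    have hch : ∀ i : Fin p, ∃ z, i ≠ 0 → z ∈ S i ∧ G.Adj v z := by
      intro i
      by_cases hi : i = 0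
      · exact ⟨v, fun h => absurd hi h⟩
      · obtain ⟨y, hy, hadj⟩ := exists_adj_of_max G (hmax i) (hvnot i hi)
        exact ⟨y, fun _ => ⟨hy, hadj⟩⟩
    choose f hf using hch
    have hmaps : ∀ i ∈ Finset.univ.erase (0 : Fin p), f i ∈ (G.neighborSet v).toFinset := by
      intro i hi
      simpa [Set.mem_toFinset] using (hf i (Finset.mem_erase.mp hi).1).2
    have hinj : Set.InjOn f (Finset.univ.erase (0 : Fin p)) := by
      intro i hi j hj hfij
      by_contra hne
      have h1 := (hf i (Finset.mem_erase.mp hi).1).1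
      have h2 := (hf j (Finset.mem_erase.mp hj).1).1
      rw [hfij] at h1
      exact Set.disjoint_left.mp (hd hne) h1 h2
    have hcard := Finset.card_le_card_of_injOn f hmaps hinj
    rw [Finset.card_erase_of_mem (Finset.mem_univ _), Finset.card_univ, Fintype.card_fin] at hcard
    rw [Set.ncard_eq_toFinset_card']
    exact hcard
  have hdval : (G.neighborSet v).ncard = p - 1 := by omega
  by_cases hout : ∃ w u, G.Adj v w ∧ G.Adj w u ∧ ¬ G.Adj v u ∧ u ≠ v
  · obtain ⟨w, u, hvw, hwu, hvu, hune⟩ := hout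
    set W : Set V := G.neighborSet v \ {w} with hWdef
    have hvwmem : w ∈ G.neighborSet v := hvw
    have hWn : W.ncard = p - 2 := by
      rw [hWdef, Set.ncard_diff_singleton_of_mem hvwmem, hdval]
      omega
    have hvW : v ∉ W := fun h => G.irrefl h.1
    have huW : u ∉ W := fun h => hvu h.1
    have hvu' : v ≠ u := fun h => hune h.symm
    have h1 : u ∉ W.toFinset := by simpa using huW
    have h2 : v ∉ insert u W.toFinset := by simp [hvu', hvW]
    set F0 : Finset V := insert v (insert u W.toFinset) with hF0
    have hF0card : F0.card = p := by
      rw [hF0, Finset.card_insert_of_notMem h2, Finset.card_insert_of_notMem h1,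
        ← Set.ncard_eq_toFinset_card', hWn]
      omega
    set e : Fin p ≃ F0 := (F0.equivFinOfCardEq hF0card).symm with he
    obtain ⟨S, hmax, hd2, hsub⟩ := hWp.2 (fun i => {(e i : V)})
      (fun i => Set.pairwise_singleton _ _)
      (fun i j hij => Set.disjoint_singleton.mpr fun h => hij (e.injective (Subtype.ext h)))
    have hvF : v ∈ F0 := by simp [hF0]
    have huF : u ∈ F0 := by simp [hF0]
    have hmem : ∀ x (hx : x ∈ F0), x ∈ S (e.symm ⟨x, hx⟩) := fun x hx =>
      hsub _ (by simp)
    have hui1 : u ∈ S (e.symm ⟨u, huF⟩) := hmem u huF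
    have hvi0 : v ∈ S (e.symm ⟨v, hvF⟩) := hmem v hvF
    have hne01 : e.symm ⟨v, hvF⟩ ≠ e.symm ⟨u, huF⟩ := by
      intro h
      exact hvu' (by simpa using congrArg (fun t => (e t : V)) h)
    have hvnotS1 : v ∉ S (e.symm ⟨u, huF⟩) := Set.disjoint_left.mp (hd2 hne01) hvi0
    obtain ⟨y, hyS, hvy⟩ := exists_adj_of_max G (hmax _) hvnotS1
    by_cases hyw : y = w
    · subst hyw
      exact (hmax _).1 hyS hui1 hwu.ne hwu
    · have hyW : y ∈ W := ⟨hvy, by simpa using hyw⟩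
      have hyF : y ∈ F0 := by simp [hF0, Set.mem_toFinset, hyW]
      have hyS' : y ∈ S (e.symm ⟨y, hyF⟩) := hmem y hyF
      have hne : e.symm ⟨y, hyF⟩ ≠ e.symm ⟨u, huF⟩ := by
        intro h
        have hyu : y = u := by simpa using congrArg (fun t => (e t : V)) h
        exact hvu (hyu ▸ hvy)
      exact Set.disjoint_left.mp (hd2 hne) hyS' hyS
  · push_neg at hout
    set C : Set V := insert v (G.neighborSet v) with hCdef
    have hclosed : ∀ a ∈ C, ∀ b, G.Adj a b → b ∈ C := by
      intro a ha b hab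
      rw [hCdef, Set.mem_insert_iff] at ha ⊢
      rcases ha with rfl | ha
      · exact Or.inr hab
      · by_cases hb : b = v
        · exact Or.inl hb
        · by_cases hvb : G.Adj v b
          · exact Or.inr hvb
          · exact absurd (hout a b ha hab hvb) hb
    have huniv : ∀ u : V, u ∈ C := by
      intro u
      obtain ⟨wlk⟩ := hconn.preconnected v u
      exact walk_closed G hclosed wlk (by rw [hCdef]; exact Set.mem_insert _ _)
    have hcard : Nat.card V ≤ p := by
      have hs1 : (Set.univ : Set V) ⊆ C := fun x _ => huniv x
      have hs2 : (Set.univ : Set V).ncard ≤ C.ncard := Set.ncard_le_ncard hs1 (Set.toFinite _)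
      have hs3 : C.ncard ≤ (G.neighborSet v).ncard + 1 := by
        rw [hCdef]; exact Set.ncard_insert_le _ _
      rw [Set.ncard_univ] at hs2
      omega
    have hle := wp_card_le G hWp
    have h2p : p * 2 ≤ p * indepNum G := Nat.mul_le_mul_left p (by omega)
    omega

end helpers2
section helpers3
set_option linter.unusedSectionVars false
variable {V : Type*} [Finite V] (G : SimpleGraph V)


lemma wp_eq_forward {p : ℕ} (hp : 2 ≤ p) (hconn : G.Connected) (hWp : IsWp G p)
    (heq : Nat.card V = p * indepNum G) : indepNum G = 1 := by
  classical
  cases nonempty_fintype V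
  have hne : Nonempty V := (Nat.card_pos_iff.mp (by have := hWp.1; omega)).1
  obtain ⟨v0⟩ := hne
  have hα1 : 1 ≤ indepNum G := by
    have h := ncard_le_indepNum G (Set.pairwise_singleton v0 _)
    simpa using h
  by_contra hone
  have hα : 1 < indepNum G := by omega
  obtain ⟨S, hmax, hd, -⟩ := hWp.2 (fun _ => ∅) (fun i => Set.pairwise_empty _)
    (fun i j _ => by simp)
  have hcover : (⋃ i, S i) = Set.univ := by
    have hle : (Set.univ : Set V).ncard ≤ (⋃ i, S i).ncard := by
      rw [Set.ncard_univ, sum_ncard_max G hmax hd, ← heq]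
    exact Set.eq_of_subset_of_ncard_le (Set.subset_univ _) hle
  set v := v0 with hv
  obtain ⟨k, hk⟩ : ∃ k, v ∈ S k := Set.mem_iUnion.mp (by rw [hcover]; trivial)
  have hnotk : ∀ z, G.Adj v z → z ∉ S k := fun z hz hzS =>
    (hmax k).1 hk hzS hz.ne hz
  have key : ∀ (j : Fin p) (z z' : V), G.Adj v z → G.Adj v z' →
      z ∈ S j → z' ∈ S j → z = z' := by
    intro j z z' hz hz' hzj hz'j
    by_contra hzz
    have hjk : j ≠ k := fun h => hnotk z hz (h ▸ hzj)
    have hzS : ∀ m : Fin p, m ≠ j → z ∉ S m := fun m hm h =>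
      Set.disjoint_left.mp (hd (Ne.symm hm)) hzj h
    have hz'S : ∀ m : Fin p, m ≠ j → z' ∉ S m := fun m hm h =>
      Set.disjoint_left.mp (hd (Ne.symm hm)) hz'j h
    obtain ⟨T, hTmax, hTd, hTsub⟩ := hWp.2
      (fun m => if m = j then {z} else if m = k then {z'} else S m)
      (fun m => by
        split
        · exact Set.pairwise_singleton _ _
        · split
          · exact Set.pairwise_singleton _ _
          · exact (hmax m).1)
      (fun m m' hmm => by
        dsimp only
        by_cases h1 : m = j
        · rw [if_pos h1]
          by_cases h2 : m' = j
          · exact absurd (h1.trans h2.symm) hmm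
          · rw [if_neg h2]
            by_cases h4 : m' = k
            · rw [if_pos h4]; exact Set.disjoint_singleton.mpr hzz
            · rw [if_neg h4]; exact Set.disjoint_singleton_left.mpr (hzS m' h2)
        · rw [if_neg h1]
          by_cases h3 : m = k
          · rw [if_pos h3]
            by_cases h2 : m' = j
            · rw [if_pos h2]; exact Set.disjoint_singleton.mpr (Ne.symm hzz)
            · rw [if_neg h2]
              by_cases h4 : m' = k
              · exact absurd (h3.trans h4.symm) hmm
              · rw [if_neg h4]; exact Set.disjoint_singleton_left.mpr (hz'S m' h2)
          · rw [if_neg h3]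
            by_cases h2 : m' = j
            · rw [if_pos h2]; exact Set.disjoint_singleton_right.mpr (hzS m h1)
            · rw [if_neg h2]
              by_cases h4 : m' = k
              · rw [if_pos h4]; exact Set.disjoint_singleton_right.mpr (hz'S m h1)
              · rw [if_neg h4]; exact hd hmm)
    have hTz : z ∈ T j := hTsub j (by simp)
    have hTz' : z' ∈ T k := by
      apply hTsub k
      show z' ∈ (if k = j then {z} else if k = k then {z'} else S k : Set V)
      rw [if_neg (Ne.symm hjk), if_pos rfl]
      exact Set.mem_singleton _
    have hTS : ∀ m : Fin p, m ≠ j → m ≠ k → T m = S m := by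
      intro m hmj hmk
      have hsubm : S m ⊆ T m := by
        have h := hTsub m
        rwa [if_neg hmj, if_neg hmk] at h
      exact (Set.eq_of_subset_of_ncard_le hsubm
        (by rw [(hTmax m).2, (hmax m).2])).symm
    have hTcover : (⋃ i, T i) = Set.univ := by
      have hle : (Set.univ : Set V).ncard ≤ (⋃ i, T i).ncard := by
        rw [Set.ncard_univ, sum_ncard_max G hTmax hTd, ← heq]
      exact Set.eq_of_subset_of_ncard_le (Set.subset_univ _) hle
    obtain ⟨i, hvi⟩ : ∃ i, v ∈ T i := Set.mem_iUnion.mp (by rw [hTcover]; trivial)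
    by_cases hij : i = j
    · subst hij; exact (hTmax i).1 hvi hTz hz.ne hz
    by_cases hik : i = k
    · subst hik; exact (hTmax i).1 hvi hTz' hz'.ne hz'
    rw [hTS i hij hik] at hvi
    exact Set.disjoint_left.mp (hd hik) hvi hk
  have hmemall : ∀ z : V, ∃ i2, z ∈ S i2 := fun z =>
    Set.mem_iUnion.mp (by rw [hcover]; trivial)
  choose ψ hψ using hmemall
  have hmaps : ∀ z ∈ (G.neighborSet v).toFinset, ψ z ∈ Finset.univ.erase k := by
    intro z hz
    rw [Set.mem_toFinset] at hz
    exact Finset.mem_erase.mpr ⟨fun h => hnotk z hz (h ▸ hψ z), Finset.mem_univ _⟩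
  have hinj : Set.InjOn ψ ↑(G.neighborSet v).toFinset := by
    intro z hz z' hz' hzz
    rw [Finset.mem_coe, Set.mem_toFinset] at hz hz'
    exact key (ψ z) z z' hz hz' (hψ z) (hzz ▸ hψ z')
  have hc := Finset.card_le_card_of_injOn ψ hmaps hinj
  rw [Finset.card_erase_of_mem (Finset.mem_univ _), Finset.card_univ, Fintype.card_fin] at hc
  have hdg := wp_deg G hp hconn hWp hα v
  rw [Set.ncard_eq_toFinset_card'] at hdg
  omega

lemma indepNum_top [Nonempty V] : indepNum (⊤ : SimpleGraph V) = 1 := by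
  apply le_antisymm
  · refine csSup_le ⟨0, ⟨∅, Set.pairwise_empty _, by simp⟩⟩ ?_
    rintro n ⟨S, hS, rfl⟩
    by_contra h
    push_neg at h
    obtain ⟨a, b, ha, hb, hab⟩ := (Set.one_lt_ncard_iff (Set.toFinite S)).mp h
    exact hS ha hb hab hab
  · obtain ⟨v⟩ := ‹Nonempty V›
    have h := ncard_le_indepNum (⊤ : SimpleGraph V) (Set.pairwise_singleton v _)
    simpa using h

lemma complete_of_indepNum_one (hα : indepNum G = 1) : G = ⊤ := by
  ext a b
  simp only [SimpleGraph.top_adj]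
  constructor
  · exact fun h => h.ne
  · intro hab
    by_contra hadj
    have hind : IsIndepSet G {a, b} := by
      intro x hx y hy hxy
      rcases hx with rfl | hx
      · rcases hy with rfl | hy
        · exact absurd rfl hxy
        · rw [Set.mem_singleton_iff] at hy; subst hy; exact hadj
      · rw [Set.mem_singleton_iff] at hx; subst hx
        rcases hy with rfl | hy
        · exact fun h => hadj h.symm
        · rw [Set.mem_singleton_iff] at hy; exact absurd hy.symm hxy
    have h2 := ncard_le_indepNum G hind
    rw [Set.ncard_pair hab, hα] at h2
    omega

end helpers3

/-- For a finite connected `W_p` graph (`p ≥ 2`) of order `n` with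
independence number `α`: (i) `n ≥ p·α`, with equality iff `G` is the complete graph
on `p` vertices; and (ii) if `α > 1` then `δ(G) ≥ p`. -/
theorem wp_order_bound {V : Type*} [Finite V] (G : SimpleGraph V) (p : ℕ)
    (hp : 2 ≤ p) (hconn : G.Connected) (hWp : IsWp G p) :
    (p * indepNum G ≤ Nat.card V ∧
        (Nat.card V = p * indepNum G ↔ Nat.card V = p ∧ G = ⊤)) ∧
      (1 < indepNum G → ∀ v : V, p ≤ (G.neighborSet v).ncard) := by
  have hne : Nonempty V := (Nat.card_pos_iff.mp (by have := hWp.1; omega)).1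
  refine ⟨⟨wp_card_le G hWp, ?_, ?_⟩, fun hα v => wp_deg G hp hconn hWp hα v⟩
  · intro heq
    have h1 := wp_eq_forward G hp hconn hWp heq
    exact ⟨by rw [heq, h1, mul_one], complete_of_indepNum_one G h1⟩
  · rintro ⟨hn, rfl⟩
    rw [indepNum_top, mul_one, hn]


end WpGraphs
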